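/- arXiv:1309.0953 — 5 statements merged into one kernel-verified Lean document; each statement's English description precedes it below -/
import Mathlib

section
/- Let a > 2 + √2 and H > 0, set x₃* = (1 + √(1 + 8H(a−2)(2a−1)))/(2(a−2)(2a−1)), x₁* = 2(a−1)x₃*, x₂* = 1 − (3a−2)x₃*. Then (x₁*, x₂*, x₃*) is an equilibrium of the harvested one predator–two prey system: 1 − x₁* − x₂* − a·x₃* = 0, 1 − (3/2)x₁* − x₂* − x₃* = 0, and x₃*·(−1 + (a/2)x₁* + (1/2)x₂*) − H = 0. -/
/-! With `k = (a - 2)(2a - 1)`, the prey equations are linear identities in `x₃`, and substituting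
`x₁*`, `x₂*` into the predator equation leaves the quadratic `k x₃² - x₃ - 2H = 0`, of which `x₃*`
is the root given by the quadratic formula. -/

theorem mul_sq_sub_eq_of_eq_quadratic_root {k c x : ℝ} (hk : k ≠ 0) (hd : 0 ≤ 1 + 4 * k * c)
    (hx : x = (1 + √(1 + 4 * k * c)) / (2 * k)) :
    k * x ^ 2 - x = c := by
  have hdiscrim : discrim k (-1) (-c) = √(1 + 4 * k * c) * √(1 + 4 * k * c) := by
    rw [Real.mul_self_sqrt hd, discrim]
    ring
  have hroot := (quadratic_eq_zero_iff hk hdiscrim x).2 (Or.inl (by rw [hx, neg_neg]))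
  linear_combination hroot

/-- Let `a > 2 + √2` and `H > 0`, set
`x₃* = (1 + √(1 + 8H(a−2)(2a−1)))/(2(a−2)(2a−1))`, `x₁* = 2(a−1)x₃*`,
`x₂* = 1 − (3a−2)x₃*`. Then `(x₁*, x₂*, x₃*)` is an equilibrium of the harvested
one predator–two prey system:
`1 − x₁* − x₂* − a·x₃* = 0`, `1 − (3/2)x₁* − x₂* − x₃* = 0`, and
`x₃*·(−1 + (a/2)x₁* + (1/2)x₂*) − H = 0`. -/
theorem stmt_1 (a H x₁ x₂ x₃ : ℝ)
    (ha : a > 2 + Real.sqrt 2) (hH : H > 0)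
    (hx₃ : x₃ = (1 + Real.sqrt (1 + 8 * H * (a - 2) * (2 * a - 1))) /
      (2 * (a - 2) * (2 * a - 1)))
    (hx₁ : x₁ = 2 * (a - 1) * x₃)
    (hx₂ : x₂ = 1 - (3 * a - 2) * x₃) :
    1 - x₁ - x₂ - a * x₃ = 0 ∧
      1 - (3 / 2) * x₁ - x₂ - x₃ = 0 ∧
      x₃ * (-1 + (a / 2) * x₁ + (1 / 2) * x₂) - H = 0 := by
  subst hx₁ hx₂
  refine ⟨by ring, by ring, ?_⟩
  have hk : 0 < (a - 2) * (2 * a - 1) := by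
    have := Real.sqrt_nonneg 2
    apply mul_pos <;> linarith
  have hquadratic : (a - 2) * (2 * a - 1) * x₃ ^ 2 - x₃ = 2 * H := by
    refine mul_sq_sub_eq_of_eq_quadratic_root hk.ne' (by positivity) ?_
    rw [hx₃]
    ring_nf
  linear_combination hquadratic / 2
end

section
/- Let a > 2 + √2 and H > 0, and define x₃* = (1 + √(1 + 8H(a−2)(2a−1)))/(2(a−2)(2a−1)), x₁* = 2(a−1)x₃*, x₂* = 1 − (3a−2)x₃*. Then x₃* > 0 and x₁* > 0; moreover x₂* > 0 if and only if H·(3a−2)² < a² − 4a + 2. In particular, when H·(3a−2)² < a² − 4a + 2 all three coordinates of the equilibrium are positive. -/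
/-!
With `k = (a−2)(2a−1)` and `c = 3a−2`, `x₂* > 0` says `c·(1 + √(1 + 8Hk)) < 2k`. Since
`k − c = 2(a² − 4a + 2) > 0`, the right side of `c·√(1 + 8Hk) < 2k − c` is positive, so squaring
is an equivalence and turns the condition into `8Hkc² < 4k(k − c)`, i.e. `Hc² < a² − 4a + 2`.
-/

open Real

lemma mul_sqrt_lt_iff {c d t : ℝ} (hc : 0 ≤ c) (hd : 0 < d) :
    c * √t < d ↔ c ^ 2 * t < d ^ 2 := by
  rw [← sqrt_lt' hd, sqrt_mul (sq_nonneg c), sqrt_sq hc]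

lemma mul_div_two_mul_lt_one_iff {k c H : ℝ} (hk : 0 < k) (hc : 0 ≤ c) (hck : c < 2 * k) :
    c * ((1 + √(1 + 8 * H * k)) / (2 * k)) < 1 ↔ 2 * H * c ^ 2 < k - c := by
  have hsq : (2 * k - c) ^ 2 - c ^ 2 * (1 + 8 * H * k) = 4 * k * (k - c - 2 * H * c ^ 2) := by
    ring
  rw [← mul_div_assoc, div_lt_one (by positivity), mul_add, mul_one, ← lt_sub_iff_add_lt',
    mul_sqrt_lt_iff hc (by linarith), ← sub_pos, hsq, mul_pos_iff_of_pos_left (by positivity),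
    sub_pos]

lemma sq_sub_four_mul_add_two_pos {a : ℝ} (ha : 2 + √2 < a) : 0 < a ^ 2 - 4 * a + 2 := by
  have h : √2 ^ 2 < (a - 2) ^ 2 :=
    pow_lt_pow_left₀ (by linarith) (sqrt_nonneg 2) two_ne_zero
  rw [sq_sqrt zero_le_two] at h
  linarith

theorem stmt_2_general (a H x₁ x₂ x₃ : ℝ)
    (ha : a > 2 + Real.sqrt 2)
    (hx₃ : x₃ = (1 + Real.sqrt (1 + 8 * H * (a - 2) * (2 * a - 1))) /
      (2 * (a - 2) * (2 * a - 1)))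
    (hx₁ : x₁ = 2 * (a - 1) * x₃)
    (hx₂ : x₂ = 1 - (3 * a - 2) * x₃) :
    x₃ > 0 ∧ x₁ > 0 ∧
      (x₂ > 0 ↔ H * (3 * a - 2) ^ 2 < a ^ 2 - 4 * a + 2) ∧
      (H * (3 * a - 2) ^ 2 < a ^ 2 - 4 * a + 2 → x₁ > 0 ∧ x₂ > 0 ∧ x₃ > 0) := by
  have ha₂ : 2 < a := by linarith [sqrt_nonneg 2]
  have hq := sq_sub_four_mul_add_two_pos ha
  set k := (a - 2) * (2 * a - 1) with hk_def
  have hk : 0 < k := mul_pos (by linarith) (by linarith)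
  have hkc : k - (3 * a - 2) = 2 * (a ^ 2 - 4 * a + 2) := by ring
  have hx₃k : x₃ = (1 + √(1 + 8 * H * k)) / (2 * k) := by
    rw [hx₃]; simp only [hk_def, mul_assoc]
  have h₃ : x₃ > 0 := hx₃k ▸ div_pos (by positivity) (by positivity)
  have h₁ : x₁ > 0 := hx₁ ▸ mul_pos (by linarith) h₃
  have h₂ : x₂ > 0 ↔ H * (3 * a - 2) ^ 2 < a ^ 2 - 4 * a + 2 := by
    rw [hx₂, gt_iff_lt, sub_pos, hx₃k,
      mul_div_two_mul_lt_one_iff hk (by linarith) (by linarith), hkc]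
    constructor <;> intro h <;> linarith
  exact ⟨h₃, h₁, h₂, fun h => ⟨h₁, h₂.2 h, h₃⟩⟩

/-- Let `a > 2 + √2` and `H > 0`, and define
`x₃* = (1 + √(1 + 8H(a−2)(2a−1)))/(2(a−2)(2a−1))`, `x₁* = 2(a−1)x₃*`,
`x₂* = 1 − (3a−2)x₃*`. Then `x₃* > 0` and `x₁* > 0`; moreover `x₂* > 0` if and
only if `H·(3a−2)² < a² − 4a + 2`. In particular, when `H·(3a−2)² < a² − 4a + 2`
all three coordinates of the equilibrium are positive. -/
theorem stmt_2 (a H x₁ x₂ x₃ : ℝ)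
    (ha : a > 2 + Real.sqrt 2) (hH : H > 0)
    (hx₃ : x₃ = (1 + Real.sqrt (1 + 8 * H * (a - 2) * (2 * a - 1))) /
      (2 * (a - 2) * (2 * a - 1)))
    (hx₁ : x₁ = 2 * (a - 1) * x₃)
    (hx₂ : x₂ = 1 - (3 * a - 2) * x₃) :
    x₃ > 0 ∧ x₁ > 0 ∧
      (x₂ > 0 ↔ H * (3 * a - 2) ^ 2 < a ^ 2 - 4 * a + 2) ∧
      (H * (3 * a - 2) ^ 2 < a ^ 2 - 4 * a + 2 → x₁ > 0 ∧ x₂ > 0 ∧ x₃ > 0) :=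
  stmt_2_general a H x₁ x₂ x₃ ha hx₃ hx₁ hx₂
end

section
/- Let a > 2 + √2 and H > 0 with H·(3a−2)² < a² − 4a + 2, and let x₁*, x₂*, x₃* be the positive equilibrium coordinates. Define a₃ = (1/4)·x₁*·x₂*·x₃*·(2a−1)(a−2) and a₅ = (1/2)·x₁*·x₂*·H/x₃*. Then a₃ > a₅ > 0; in particular a₃² − a₅² > 0. -/
/-!
With `D = (a - 2)(2a - 1)`, the coordinate `x₃*` is the positive root of `D x² = x + 2H`.
Substituting `D x₃*² = x₃* + 2H` into `a₃ - a₅ = x₁* x₂* (D x₃*² - 2H) / (4 x₃*)` gives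
`a₃ - a₅ = x₁* x₂* / 4`, so everything reduces to the positivity of the coordinates.
The only delicate one is `x₂* > 0`, i.e. `x₃* < 1 / (3a - 2)`: the quadratic `D x² - x - 2H`
is positive at `1 / (3a - 2)` exactly when `H (3a - 2)² < a² - 4a + 2`.
-/

open Real

lemma mul_sq_eq_add_of_eq_quadratic_root {D c x : ℝ} (hD : D ≠ 0) (hc : 0 ≤ 1 + 4 * D * c)
    (hx : x = (1 + √(1 + 4 * D * c)) / (2 * D)) : D * x ^ 2 = x + c := by
  have hdiscrim : discrim D (-1) (-c) = √(1 + 4 * D * c) * √(1 + 4 * D * c) := by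
    rw [Real.mul_self_sqrt hc, discrim]; ring
  have hzero := (quadratic_eq_zero_iff hD hdiscrim x).mpr (Or.inl (by rw [hx]; ring))
  linear_combination hzero

/-- `hq` says that `D y² - y - c` is positive at `y = 1 / t` (cleared of denominators), so the
root `x` lies below `1 / t`. -/
lemma mul_lt_one_of_mul_sq_eq_add {D c x t : ℝ} (hc : 0 ≤ c) (hroot : D * x ^ 2 = x + c)
    (ht : 0 < t) (hq : t + c * t ^ 2 < D) : t * x < 1 := by
  by_contra! hx
  have hle_sq : t * x ≤ (t * x) ^ 2 := by nlinarith
  have hone_le_sq : 1 ≤ (t * x) ^ 2 := one_le_pow₀ hx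
  refine lt_irrefl (D * (t * x) ^ 2) ?_
  calc D * (t * x) ^ 2 = t * (t * x) + c * t ^ 2 := by linear_combination t ^ 2 * hroot
    _ ≤ t * (t * x) ^ 2 + c * t ^ 2 * (t * x) ^ 2 :=
        add_le_add (by gcongr) (le_mul_of_one_le_right (by positivity) hone_le_sq)
    _ = (t + c * t ^ 2) * (t * x) ^ 2 := by ring
    _ < D * (t * x) ^ 2 := by gcongr

/-- Let `a > 2 + √2` and `H > 0` with `H·(3a−2)² < a² − 4a + 2`, and
let `x₁*, x₂*, x₃*` be the positive equilibrium coordinates. Define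
`a₃ = (1/4)·x₁*·x₂*·x₃*·(2a−1)(a−2)` and `a₅ = (1/2)·x₁*·x₂*·H/x₃*`. Then
`a₃ > a₅ > 0`; in particular `a₃² − a₅² > 0`. -/
theorem stmt_3 (a H x₁ x₂ x₃ a₃ a₅ : ℝ)
    (ha : a > 2 + Real.sqrt 2) (hH : H > 0)
    (hHc : H * (3 * a - 2) ^ 2 < a ^ 2 - 4 * a + 2)
    (hx₃ : x₃ = (1 + Real.sqrt (1 + 8 * H * (a - 2) * (2 * a - 1))) /
      (2 * (a - 2) * (2 * a - 1)))
    (hx₁ : x₁ = 2 * (a - 1) * x₃)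
    (hx₂ : x₂ = 1 - (3 * a - 2) * x₃)
    (ha₃ : a₃ = (1 / 4) * x₁ * x₂ * x₃ * ((2 * a - 1) * (a - 2)))
    (ha₅ : a₅ = (1 / 2) * x₁ * x₂ * H / x₃) :
    a₃ > a₅ ∧ a₅ > 0 ∧ a₃ ^ 2 - a₅ ^ 2 > 0 := by
  have ha2 : 2 < a := by linarith [Real.sqrt_nonneg 2]
  have hD : 0 < (a - 2) * (2 * a - 1) := by nlinarith
  have hx₃' : x₃ = (1 + √(1 + 4 * ((a - 2) * (2 * a - 1)) * (2 * H))) /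
      (2 * ((a - 2) * (2 * a - 1))) := by
    rw [hx₃]; ring_nf
  have hroot : (a - 2) * (2 * a - 1) * x₃ ^ 2 = x₃ + 2 * H :=
    mul_sq_eq_add_of_eq_quadratic_root hD.ne' (by positivity) hx₃'
  have hx₃pos : 0 < x₃ := by rw [hx₃']; positivity
  have hx₁pos : 0 < x₁ := by rw [hx₁]; nlinarith
  have hx₂pos : 0 < x₂ := by
    have hq : 3 * a - 2 + 2 * H * (3 * a - 2) ^ 2 < (a - 2) * (2 * a - 1) := by nlinarith
    have := mul_lt_one_of_mul_sq_eq_add (by positivity) hroot (by linarith) hq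
    linarith
  have hdiff : a₃ - a₅ = x₁ * x₂ / 4 := by
    rw [ha₃, ha₅]
    field_simp
    linear_combination 2 * hroot
  have ha₅pos : 0 < a₅ := by rw [ha₅]; positivity
  have hgt : a₅ < a₃ := by linarith [mul_pos hx₁pos hx₂pos]
  refine ⟨hgt, ha₅pos, ?_⟩
  rw [sq_sub_sq]
  exact mul_pos (by linarith) (by linarith)
end

section
/- Let c* = sSup {k ∈ ℝ | there exists x > 0 with cos x = 1 − kx/π}. Then 2 < c* < 3 (numerically c* ≈ 2.2764), and for every x ≥ 0 one has cos x ≥ 1 − c*·x/π. -/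
/-!
The slopes in question are exactly the chord slopes `π (1 - cos x) / x` for `x > 0`, so `c*` is
their supremum and the inequality `cos x ≥ 1 - c* x / π` holds by definition of a supremum. At
`x = 2π/3` the slope is `9/4 > 2`. For the upper bound, `1 - cos x ≤ 8x/9` for all `x ≥ 0`: use
`1 - cos x ≤ x²/2` near `0`, the `1`-Lipschitz property of `cos` together with `cos 1 ≥ 1/2` in the
middle range, and `1 - cos x ≤ 2` beyond `9/4`. Hence every slope is at most `8π/9 < 3`.
-/

open Real Set

lemma one_sub_cos_le_sub_half {x : ℝ} (hx : 1 ≤ x) : 1 - cos x ≤ x - 1 / 2 := by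
  have hlip := neg_le_of_abs_le (abs_cos_sub_cos_le x 1)
  have hcos_one : 1 / 2 ≤ cos 1 := by linarith [one_sub_sq_div_two_le_cos (x := (1 : ℝ))]
  rw [abs_of_nonneg (by linarith)] at hlip
  linarith

lemma one_sub_cos_le_eight_ninths_mul {x : ℝ} (hx : 0 ≤ x) : 1 - cos x ≤ 8 / 9 * x := by
  rcases le_total x (16 / 9) with hsmall | hmid
  · nlinarith [one_sub_sq_div_two_le_cos (x := x)]
  rcases le_total x (9 / 4) with hmid' | hlarge
  · linarith [one_sub_cos_le_sub_half (x := x) (by linarith)]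
  · linarith [neg_one_le_cos x]

noncomputable def cosChordSlope (x : ℝ) : ℝ := π * (1 - cos x) / x

lemma cos_eq_one_sub_iff_cosChordSlope_eq {x k : ℝ} (hx : 0 < x) :
    cos x = 1 - k * x / π ↔ cosChordSlope x = k := by
  rw [cosChordSlope, div_eq_iff hx.ne', eq_sub_iff_add_eq, ← eq_sub_iff_add_eq',
    div_eq_iff pi_pos.ne', eq_comm, mul_comm]

lemma cosChordSlope_le {x : ℝ} (hx : 0 < x) : cosChordSlope x ≤ 8 * π / 9 := by
  rw [cosChordSlope, div_le_iff₀ hx]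
  nlinarith [one_sub_cos_le_eight_ninths_mul hx.le, pi_pos]

lemma cosChordSlope_two_pi_div_three : cosChordSlope (2 * π / 3) = 9 / 4 := by
  have hcos : cos (2 * π / 3) = -(1 / 2) := by
    rw [show 2 * π / 3 = π - π / 3 by ring, cos_pi_sub, cos_pi_div_three]
  rw [cosChordSlope, hcos]
  field_simp
  norm_num

/-- Let `c* = sSup {k ∈ ℝ | ∃ x > 0, cos x = 1 − kx/π}`. Then
`2 < c* < 3` (numerically `c* ≈ 2.2764`), and for every `x ≥ 0` one has
`cos x ≥ 1 − c*·x/π`. -/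
theorem stmt_12 (c : ℝ)
    (hc : c = sSup {k : ℝ | ∃ x > (0 : ℝ), Real.cos x = 1 - k * x / Real.pi}) :
    2 < c ∧ c < 3 ∧ ∀ x ≥ (0 : ℝ), Real.cos x ≥ 1 - c * x / Real.pi := by
  have hslopes : {k : ℝ | ∃ x > (0 : ℝ), cos x = 1 - k * x / π} = cosChordSlope '' Ioi 0 := by
    ext k
    exact exists_congr fun x => and_congr_right cos_eq_one_sub_iff_cosChordSlope_eq
  rw [hslopes] at hc
  have hbdd : BddAbove (cosChordSlope '' Ioi 0) :=
    ⟨8 * π / 9, forall_mem_image.2 fun _ hx => cosChordSlope_le hx⟩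
  have hle_c : ∀ x > 0, cosChordSlope x ≤ c := fun x hx =>
    hc ▸ le_csSup hbdd (mem_image_of_mem _ hx)
  refine ⟨?_, ?_, ?_⟩
  · have := hle_c (2 * π / 3) (by positivity)
    rw [cosChordSlope_two_pi_div_three] at this
    linarith
  · have : c ≤ 8 * π / 9 :=
      hc ▸ csSup_le (nonempty_Ioi.image _) (forall_mem_image.2 fun _ hx => cosChordSlope_le hx)
    linarith [pi_lt_d2]
  · intro x hx
    rcases hx.eq_or_lt with rfl | hx
    · simp
    have hslope := hle_c x hx
    rw [cosChordSlope, div_le_iff₀ hx] at hslope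
    rw [ge_iff_le, sub_le_comm, le_div_iff₀ pi_pos]
    linarith
end

section
/- Let f : ℝ → ℝ be a probability density of delay with finite expectation E = ∫₀^∞ τ f(τ) dτ, and let ω > 0. Then ∫₀^∞ f(τ)cos(ωτ) dτ ≥ 1 − c*·ω·E/π, where c* = sSup {k ∈ ℝ | there exists x > 0 with cos x = 1 − kx/π}. -/
/-!
Since `cos` is `1`-Lipschitz, every secant slope `π (1 - cos x) / x` is at most `π`, so `c*` is
finite and `cos x ≥ 1 - c* x / π` for all `x ≥ 0`. Multiplying by `f(τ) ≥ 0` at `x = ωτ` and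
integrating gives `∫ f(τ) cos(ωτ) dτ ≥ ∫ f - (c* ω / π) ∫ τ f(τ) dτ = 1 - c* ω E / π`.
-/

open MeasureTheory Real

/-- Its supremum is the constant `c*`. -/
def cosSecantSlopes : Set ℝ := {k : ℝ | ∃ x > (0 : ℝ), cos x = 1 - k * x / π}

lemma one_sub_cos_le_self {x : ℝ} (hx : 0 ≤ x) : 1 - cos x ≤ x := by
  have := abs_cos_sub_cos_le x 0
  rw [cos_zero, sub_zero, abs_of_nonneg hx, abs_le] at this
  linarith

lemma bddAbove_cosSecantSlopes : BddAbove cosSecantSlopes := by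
  refine ⟨π, fun k ⟨x, hx, hcos⟩ => ?_⟩
  have h : k * x / π ≤ x := by linarith [one_sub_cos_le_self hx.le]
  rw [div_le_iff₀ pi_pos] at h
  nlinarith

lemma one_sub_sSup_cosSecantSlopes_mul_div_pi_le_cos {x : ℝ} (hx : 0 ≤ x) :
    1 - sSup cosSecantSlopes * x / π ≤ cos x := by
  rcases hx.eq_or_lt with rfl | hx
  · simp
  set k := π * (1 - cos x) / x
  have hcos : cos x = 1 - k * x / π := by
    simp only [k]
    field_simp
    ring
  have hk : k ≤ sSup cosSecantSlopes := le_csSup bddAbove_cosSecantSlopes ⟨x, hx, hcos⟩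
  rw [hcos]
  gcongr

lemma setIntegral_sub_mul_setIntegral_le_setIntegral_mul {f g : ℝ → ℝ} {s : Set ℝ} (a : ℝ)
    (hs : MeasurableSet s) (hf : IntegrableOn f s) (hτf : IntegrableOn (fun τ => τ * f τ) s)
    (hfg : IntegrableOn (fun τ => f τ * g τ) s) (hf_nonneg : ∀ τ ∈ s, 0 ≤ f τ)
    (hg : ∀ τ ∈ s, 1 - a * τ ≤ g τ) :
    (∫ τ in s, f τ) - a * ∫ τ in s, τ * f τ ≤ ∫ τ in s, f τ * g τ := by
  rw [← integral_const_mul, ← integral_sub hf (hτf.const_mul a)]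
  refine setIntegral_mono_on (hf.sub (hτf.const_mul a)) hfg hs fun τ hτ => ?_
  calc f τ - a * (τ * f τ) = f τ * (1 - a * τ) := by ring
    _ ≤ f τ * g τ := mul_le_mul_of_nonneg_left (hg τ hτ) (hf_nonneg τ hτ)

/-- Let `f : ℝ → ℝ` be a probability density of delay with finite
expectation `E = ∫₀^∞ τ f(τ) dτ`, and let `ω > 0`. Then
`∫₀^∞ f(τ)cos(ωτ) dτ ≥ 1 − c*·ω·E/π`, where
`c* = sSup {k ∈ ℝ | ∃ x > 0, cos x = 1 − kx/π}`. -/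
theorem stmt_13 (f : ℝ → ℝ) (E ω c : ℝ)
    (hf_int : IntegrableOn f (Set.Ioi 0))
    (hf_nonneg : ∀ τ ≥ (0 : ℝ), 0 ≤ f τ)
    (hf_one : ∫ τ in Set.Ioi (0 : ℝ), f τ = 1)
    (hE_int : IntegrableOn (fun τ => τ * f τ) (Set.Ioi 0))
    (hE : E = ∫ τ in Set.Ioi (0 : ℝ), τ * f τ)
    (hω : ω > 0)
    (hc : c = sSup {k : ℝ | ∃ x > (0 : ℝ), Real.cos x = 1 - k * x / Real.pi}) :
    (∫ τ in Set.Ioi (0 : ℝ), f τ * Real.cos (ω * τ)) ≥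
      1 - c * ω * E / Real.pi := by
  have hf_cos : IntegrableOn (fun τ => f τ * cos (ω * τ)) (Set.Ioi 0) :=
    hf_int.mul_bdd (by fun_prop) (.of_forall fun τ => abs_cos_le_one (ω * τ))
  replace hc : c = sSup cosSecantSlopes := hc
  have hcos_bound : ∀ τ ∈ Set.Ioi (0 : ℝ), 1 - c * ω / π * τ ≤ cos (ω * τ) := fun τ hτ => by
    have := one_sub_sSup_cosSecantSlopes_mul_div_pi_le_cos (mul_pos hω hτ).le
    rw [← hc] at this
    convert this using 2
    ring
  have := setIntegral_sub_mul_setIntegral_le_setIntegral_mul (c * ω / π) measurableSet_Ioi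
    hf_int hE_int hf_cos (fun τ hτ => hf_nonneg τ (le_of_lt hτ)) hcos_bound
  rw [hf_one, ← hE] at this
  linarith [show c * ω / π * E = c * ω * E / π by ring]
end
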